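/- arXiv:math/0108059 — 4 statements merged into one kernel-verified Lean document; each statement's English description precedes it below -/
import Mathlib

section
/- Let H be a complex Hilbert space and let A, B be bounded linear operators on H. If for every x in H either ⟨Ax, x⟩ = 0 or ⟨Bx, x⟩ = 0, then A = 0 or B = 0. -/
/-!
If `⟪A a, a⟫ ≠ 0` and `⟪B b, b⟫ ≠ 0`, restrict both quadratic forms to the real line
`t ↦ a + t • b`. There each one is a quadratic polynomial in `t`, nonzero because of its
constant term resp. its leading coefficient. Their product is then a nonzero polynomial, so it
cannot vanish at every real `t`: some point of the line is isotropic for neither `A` nor `B`.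
Over `ℂ` an operator whose quadratic form vanishes identically is zero.
-/

open scoped InnerProductSpace
open Polynomial

namespace Polynomial

theorem eq_zero_of_forall_eval_ofReal_eq_zero {𝕜 : Type*} [RCLike 𝕜] {p : 𝕜[X]}
    (hp : ∀ t : ℝ, p.eval (t : 𝕜) = 0) : p = 0 := by
  refine p.eq_zero_of_infinite_isRoot (Set.Infinite.mono ?_
    (Set.infinite_range_of_injective (RCLike.ofReal_injective (K := 𝕜))))
  rintro _ ⟨t, rfl⟩
  exact hp t

end Polynomial

section InnerMapSelfAlongLine

variable {𝕜 E : Type*} [RCLike 𝕜] [SeminormedAddCommGroup E] [InnerProductSpace 𝕜 E]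

/-- It agrees with `t ↦ ⟪T (a + t • b), a + t • b⟫` only at real `t`, where `conj t = t`. -/
noncomputable def innerMapSelfAlongLine (T : E →ₗ[𝕜] E) (a b : E) : 𝕜[X] :=
  C ⟪T a, a⟫_𝕜 + C (⟪T a, b⟫_𝕜 + ⟪T b, a⟫_𝕜) * X + C ⟪T b, b⟫_𝕜 * X ^ 2

variable (T : E →ₗ[𝕜] E) (a b : E)

theorem eval_ofReal_innerMapSelfAlongLine (t : ℝ) :
    (innerMapSelfAlongLine T a b).eval (t : 𝕜) = ⟪T (a + (t : 𝕜) • b), a + (t : 𝕜) • b⟫_𝕜 := by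
  simp only [innerMapSelfAlongLine, eval_add, eval_mul, eval_C, eval_X, eval_pow, map_add,
    map_smul, inner_add_left, inner_add_right, inner_smul_left, inner_smul_right,
    RCLike.conj_ofReal]
  ring

theorem eval_zero_innerMapSelfAlongLine :
    (innerMapSelfAlongLine T a b).eval 0 = ⟪T a, a⟫_𝕜 := by
  simp [innerMapSelfAlongLine]

theorem coeff_two_innerMapSelfAlongLine :
    (innerMapSelfAlongLine T a b).coeff 2 = ⟪T b, b⟫_𝕜 := by
  simp [innerMapSelfAlongLine]

end InnerMapSelfAlongLine

theorem exists_inner_map_self_ne_zero_and_ne_zero {𝕜 E : Type*} [RCLike 𝕜]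
    [SeminormedAddCommGroup E] [InnerProductSpace 𝕜 E] (S T : E →ₗ[𝕜] E) {a b : E}
    (ha : ⟪S a, a⟫_𝕜 ≠ 0) (hb : ⟪T b, b⟫_𝕜 ≠ 0) :
    ∃ x, ⟪S x, x⟫_𝕜 ≠ 0 ∧ ⟪T x, x⟫_𝕜 ≠ 0 := by
  have hS : innerMapSelfAlongLine S a b ≠ 0 := fun h0 ↦ ha <| by
    rw [← eval_zero_innerMapSelfAlongLine S a b, h0, eval_zero]
  have hT : innerMapSelfAlongLine T a b ≠ 0 := fun h0 ↦ hb <| by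
    rw [← coeff_two_innerMapSelfAlongLine T a b, h0, coeff_zero]
  obtain ⟨t, ht⟩ : ∃ t : ℝ,
      (innerMapSelfAlongLine S a b * innerMapSelfAlongLine T a b).eval (t : 𝕜) ≠ 0 := by
    by_contra! h
    exact mul_ne_zero hS hT (eq_zero_of_forall_eval_ofReal_eq_zero h)
  rw [eval_mul, eval_ofReal_innerMapSelfAlongLine, eval_ofReal_innerMapSelfAlongLine] at ht
  exact ⟨_, left_ne_zero_of_mul ht, right_ne_zero_of_mul ht⟩

theorem stmt_0_general {H : Type*} [NormedAddCommGroup H] [InnerProductSpace ℂ H]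
    (A B : H →L[ℂ] H)
    (h : ∀ x : H, ⟪A x, x⟫_ℂ = 0 ∨ ⟪B x, x⟫_ℂ = 0) :
    A = 0 ∨ B = 0 := by
  by_contra! hAB
  have exists_ne_zero (T : H →L[ℂ] H) (hT : T ≠ 0) : ∃ x, ⟪T x, x⟫_ℂ ≠ 0 := by
    by_contra! h0
    exact hT (ContinuousLinearMap.coe_injective ((inner_map_self_eq_zero _).mp h0))
  obtain ⟨a, ha⟩ := exists_ne_zero A hAB.1
  obtain ⟨b, hb⟩ := exists_ne_zero B hAB.2
  obtain ⟨x, hAx, hBx⟩ := exists_inner_map_self_ne_zero_and_ne_zero (A : H →ₗ[ℂ] H) B ha hb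
  exact (h x).elim hAx hBx

theorem stmt_0 {H : Type*} [NormedAddCommGroup H] [InnerProductSpace ℂ H]
    [CompleteSpace H] (A B : H →L[ℂ] H)
    (h : ∀ x : H, ⟪A x, x⟫_ℂ = 0 ∨ ⟪B x, x⟫_ℂ = 0) :
    A = 0 ∨ B = 0 :=
  stmt_0_general A B h
end

section
/- In a separable Hilbert space, any family of pairwise orthogonal nonzero idempotent bounded operators (i.e., EF = FE = 0 for distinct members) is countable. -/
/-!
Pick a nonzero fixed vector `x i` of each idempotent `E i`. For `i ≠ j` the operator `E i` fixes
`x i` and kills `x j`, so `‖x i‖ = ‖E i (x i - x j)‖ ≤ ‖E i‖ * ‖x i - x j‖`. Hence the balls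
around `x i` of radius `‖x i‖ / (2 * ‖E i‖)` are nonempty, open and pairwise disjoint, and a
separable space has only countably many such sets.
-/

open Metric Function

namespace ContinuousLinearMap

variable {𝕜 E F : Type*} [NontriviallyNormedField 𝕜] [SeminormedAddCommGroup E] [NormedSpace 𝕜 E]
  [SeminormedAddCommGroup F] [NormedSpace 𝕜 F]

theorem norm_apply_le_opNorm_mul_dist {T : E →L[𝕜] F} {x y : E} (hy : T y = 0) :
    ‖T x‖ ≤ ‖T‖ * dist x y := by
  simpa [dist_eq_norm, hy] using T.le_opNorm (x - y)

theorem pairwise_disjoint_ball_of_apply_eq_zero {ι : Type*} {T : ι → E →L[𝕜] F} {x : ι → E}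
    (hT : Pairwise fun i j ↦ T i (x j) = 0) :
    Pairwise (Disjoint on fun i ↦ ball (x i) (‖T i (x i)‖ / (2 * ‖T i‖))) := by
  have hrad : ∀ i j, i ≠ j → ‖T i (x i)‖ / (2 * ‖T i‖) ≤ dist (x i) (x j) / 2 := fun i j hij ↦
    div_le_of_le_mul₀ (by positivity) (by positivity) <| by
      linarith [norm_apply_le_opNorm_mul_dist (x := x i) (hT hij)]
  intro i j hij
  apply ball_disjoint_ball
  linarith [hrad i j hij, hrad j i hij.symm, dist_comm (x i) (x j)]

theorem countable_of_pairwise_apply_eq_zero {G : Type*} [NormedAddCommGroup G] [NormedSpace 𝕜 G]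
    [TopologicalSpace.SeparableSpace E] {ι : Type*} {T : ι → E →L[𝕜] G} {x : ι → E}
    (hx : ∀ i, T i (x i) ≠ 0) (hT : Pairwise fun i j ↦ T i (x j) = 0) : Countable ι := by
  refine (pairwise_disjoint_ball_of_apply_eq_zero hT).countable_of_isOpen_disjoint
    (fun _ ↦ isOpen_ball) fun i ↦ nonempty_ball.2 ?_
  have hTx : 0 < ‖T i (x i)‖ := norm_pos_iff.2 (hx i)
  have hT : 0 < ‖T i‖ :=
    pos_of_mul_pos_left (hTx.trans_le ((T i).le_opNorm (x i))) (norm_nonneg _)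
  positivity

theorem exists_apply_eq_self_ne_zero {T : E →L[𝕜] E} (hT : IsIdempotentElem T) (hT₀ : T ≠ 0) :
    ∃ x, T x = x ∧ x ≠ 0 := by
  obtain ⟨y, hy⟩ : ∃ y, T y ≠ 0 := by
    by_contra! h
    exact hT₀ (ext h)
  exact ⟨T y, congr($hT y), hy⟩

end ContinuousLinearMap

theorem stmt_10_general {H : Type*} [NormedAddCommGroup H] [InnerProductSpace ℂ H]
    [TopologicalSpace.SeparableSpace H]
    {ι : Type*} (E : ι → (H →L[ℂ] H))
    (hidem : ∀ i, E i * E i = E i) (hne : ∀ i, E i ≠ 0)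
    (horth : ∀ i j, i ≠ j → E i * E j = 0 ∧ E j * E i = 0) :
    Countable ι := by
  choose x hfix hx using fun i ↦ (E i).exists_apply_eq_self_ne_zero (hidem i) (hne i)
  refine ContinuousLinearMap.countable_of_pairwise_apply_eq_zero (T := E) (x := x)
    (fun i ↦ (hfix i).symm ▸ hx i) fun i j hij ↦ ?_
  simpa [hfix j] using congr($((horth i j hij).1) (x j))

theorem stmt_10 {H : Type*} [NormedAddCommGroup H] [InnerProductSpace ℂ H]
    [CompleteSpace H] [TopologicalSpace.SeparableSpace H]
    {ι : Type*} (E : ι → (H →L[ℂ] H))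
    (hidem : ∀ i, E i * E i = E i) (hne : ∀ i, E i ≠ 0)
    (horth : ∀ i j, i ≠ j → E i * E j = 0 ∧ E j * E i = 0) :
    Countable ι :=
  stmt_10_general E hidem hne horth
end

section
/- Let φ : B(H)_h → B(H)_h be a Jordan automorphism of the Jordan ring of self-adjoint bounded operators (an additive bijection with φ(AB + BA) = φ(A)φ(B) + φ(B)φ(A)). Then φ(λI) = λI for every real λ, and φ is real-linear. -/
/-!
A Jordan automorphism φ fixes `1`: the Jordan identity with `1` gives `φ 1 ∘ B = 2B` for every
self-adjoint `B`, and surjectivity lets us take `B = 1`. Additivity then fixes every rational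
multiple of `1`. Taking `A = B` in the Jordan identity shows that φ preserves squares, hence
positivity and the order; monotonicity upgrades the rational multiples of `1` to real ones. Finally
the Jordan identity with `λ • 1` gives `2 φ(λ A) = 2 λ φ(A)`.
-/

open Filter Set

theorem add_self_injective {M : Type*} [AddCommGroup M] [IsAddTorsionFree M] :
    Function.Injective fun x : M => x + x := by
  intro x y h
  simp only [← two_nsmul] at h
  exact nsmul_right_injective two_ne_zero h

theorem Monotone.eq_of_forall_ratCast_eq {M : Type*} [PartialOrder M] [TopologicalSpace M]
    [OrderClosedTopology M] {f g : ℝ → M} (hf : Monotone f) (hg : Monotone g)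
    (hg_cont : Continuous g) (h : ∀ q : ℚ, f q = g q) : f = g := by
  funext x
  apply le_antisymm
  · refine _root_.ge_of_tendsto (hg_cont.continuousWithinAt (s := Ioi x)).tendsto ?_
    filter_upwards [self_mem_nhdsWithin] with t (hxt : x < t)
    obtain ⟨q, hxq, hqt⟩ := exists_rat_btwn hxt
    calc f x ≤ f q := hf hxq.le
      _ = g q := h q
      _ ≤ g t := hg hqt.le
  · refine _root_.le_of_tendsto (hg_cont.continuousWithinAt (s := Iio x)).tendsto ?_
    filter_upwards [self_mem_nhdsWithin] with t (htx : t < x)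
    obtain ⟨q, htq, hqx⟩ := exists_rat_btwn htx
    calc g t ≤ g q := hg htq.le
      _ = f q := (h q).symm
      _ ≤ f x := hf hqx.le

section Ring

variable {A B : Type*} [Ring A] [StarRing A] [Ring B] [StarRing B]

structure IsSelfAdjointJordanHom (φ : A → B) : Prop where
  isSelfAdjoint_map : ∀ a, IsSelfAdjoint a → IsSelfAdjoint (φ a)
  map_add : ∀ a b, IsSelfAdjoint a → IsSelfAdjoint b → φ (a + b) = φ a + φ b
  map_jordan : ∀ a b, IsSelfAdjoint a → IsSelfAdjoint b →
    φ (a * b + b * a) = φ a * φ b + φ b * φ a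

namespace IsSelfAdjointJordanHom

variable {φ : A → B} (hφ : IsSelfAdjointJordanHom φ) {a b : A}
include hφ

def toAddMonoidHom : selfAdjoint A →+ B where
  toFun a := φ a
  map_zero' := by simpa using hφ.map_add 0 0 (.zero _) (.zero _)
  map_add' a b := hφ.map_add a b a.2 b.2

theorem map_sub (ha : IsSelfAdjoint a) (hb : IsSelfAdjoint b) : φ (a - b) = φ a - φ b :=
  _root_.map_sub hφ.toAddMonoidHom ⟨a, ha⟩ ⟨b, hb⟩

theorem map_ratCast_smul [Module ℝ A] [StarModule ℝ A] [Module ℝ B] (q : ℚ)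
    (ha : IsSelfAdjoint a) : φ ((q : ℝ) • a) = (q : ℝ) • φ a :=
  _root_.map_ratCast_smul hφ.toAddMonoidHom ℝ ℝ q ⟨a, ha⟩

theorem map_one [IsAddTorsionFree B]
    (hsurj : SurjOn φ {a | IsSelfAdjoint a} {b | IsSelfAdjoint b}) : φ 1 = 1 := by
  obtain ⟨u, hu, hu1⟩ := hsurj (IsSelfAdjoint.one B)
  have h := hφ.map_jordan 1 u (.one A) hu
  rw [one_mul, mul_one, hφ.map_add u u hu hu, hu1, mul_one, one_mul] at h
  exact add_self_injective h.symm

theorem map_mul_self [IsAddTorsionFree B] (ha : IsSelfAdjoint a) : φ (a * a) = φ a * φ a := by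
  have h := hφ.map_jordan a a ha ha
  have haa : IsSelfAdjoint (a * a) := (ha.commute_iff ha).mp (.refl a)
  rw [hφ.map_add _ _ haa haa] at h
  exact add_self_injective h

theorem map_smul_of_map_smul_one [Algebra ℝ A] [StarModule ℝ A] [Algebra ℝ B]
    [IsAddTorsionFree B] {r : ℝ} (hr : φ (r • 1) = r • 1) (ha : IsSelfAdjoint a) :
    φ (r • a) = r • φ a := by
  have h := hφ.map_jordan a (r • 1) ha (.smul (.all r) (.one A))
  simp only [mul_smul_comm, smul_mul_assoc, mul_one, one_mul, hr] at h
  rw [hφ.map_add _ _ (.smul (.all r) ha) (.smul (.all r) ha)] at h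
  exact add_self_injective h

end IsSelfAdjointJordanHom

end Ring

namespace IsSelfAdjointJordanHom

variable {A B : Type*} [CStarAlgebra A] [PartialOrder A] [StarOrderedRing A]
  [CStarAlgebra B] [PartialOrder B] [StarOrderedRing B]
  {φ : A → B} (hφ : IsSelfAdjointJordanHom φ)
include hφ

theorem map_nonneg {a : A} (ha : 0 ≤ a) : 0 ≤ φ a := by
  have := IsAddTorsionFree.of_isTorsionFree ℝ B
  have hs : IsSelfAdjoint (CFC.sqrt a) := .of_nonneg (CFC.sqrt_nonneg a)
  have h := star_mul_self_nonneg (φ (CFC.sqrt a))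
  rwa [(hφ.isSelfAdjoint_map _ hs).star_eq, ← hφ.map_mul_self hs, CFC.sqrt_mul_sqrt_self a ha] at h

theorem monotoneOn : MonotoneOn φ {a | IsSelfAdjoint a} := by
  intro a ha b hb hab
  rw [← sub_nonneg, ← hφ.map_sub hb ha]
  exact hφ.map_nonneg (sub_nonneg.mpr hab)

theorem map_real_smul_one (hsurj : SurjOn φ {a | IsSelfAdjoint a} {b | IsSelfAdjoint b})
    (r : ℝ) : φ (r • 1) = r • 1 := by
  have hsa : ∀ s : ℝ, IsSelfAdjoint (s • (1 : A)) := fun s => .smul (.all s) (.one A)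
  have hmono : Monotone fun s : ℝ => φ (s • 1) := fun s t hst =>
    hφ.monotoneOn (hsa s) (hsa t) (smul_one_mono A hst)
  refine congrFun (hmono.eq_of_forall_ratCast_eq (smul_one_mono B)
    (continuous_id.smul continuous_const) fun q => ?_) r
  have := IsAddTorsionFree.of_isTorsionFree ℝ B
  rw [hφ.map_ratCast_smul q (.one A), hφ.map_one hsurj]

end IsSelfAdjointJordanHom

theorem stmt_16 {H : Type*} [NormedAddCommGroup H] [InnerProductSpace ℂ H]
    [CompleteSpace H] (φ : (H →L[ℂ] H) → (H →L[ℂ] H))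
    (hmaps : ∀ A, IsSelfAdjoint A → IsSelfAdjoint (φ A))
    (hbij : Set.BijOn φ {A : H →L[ℂ] H | IsSelfAdjoint A} {A : H →L[ℂ] H | IsSelfAdjoint A})
    (hadd : ∀ A B : H →L[ℂ] H, IsSelfAdjoint A → IsSelfAdjoint B → φ (A + B) = φ A + φ B)
    (hjordan : ∀ A B : H →L[ℂ] H, IsSelfAdjoint A → IsSelfAdjoint B →
      φ (A * B + B * A) = φ A * φ B + φ B * φ A) :
    (∀ lam : ℝ, φ (lam • (1 : H →L[ℂ] H)) = lam • (1 : H →L[ℂ] H)) ∧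
    (∀ (lam : ℝ) (A : H →L[ℂ] H), IsSelfAdjoint A → φ (lam • A) = lam • φ A) := by
  have hφ : IsSelfAdjointJordanHom φ := ⟨hmaps, hadd, hjordan⟩
  have := IsAddTorsionFree.of_isTorsionFree ℝ (H →L[ℂ] H)
  have hscalar := hφ.map_real_smul_one hbij.surjOn
  exact ⟨hscalar, fun lam _ hA => hφ.map_smul_of_map_smul_one (hscalar lam) hA⟩
end

section
/- Let φ : B(H)_h → B(H)_h be a map such that φ(P) = P for every orthogonal projection P, and for every A ∈ B(H)_h and unit vector x ∈ H there exists a unitary or antiunitary operator U (depending on A and x) with φ(A) = UAU* and φ(x⊗x) = U(x⊗x)U*. Then φ(A) = A for all A ∈ B(H)_h. -/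
/-
Both φ(A) and A are determined by their quadratic forms x ↦ ⟨·x, x⟩ on unit vectors. Fix a unit
vector x and the (anti)unitary U supplied for A and x. Since φ fixes the projection x ⊗ x, the
identity U (x ⊗ x) U* = x ⊗ x forces U* x = c x with |c| = 1, hence
⟨φ(A)x, x⟩ = ⟨A U*x, U*x⟩ = |c|² ⟨Ax, x⟩ = ⟨Ax, x⟩ in the unitary case; in the antiunitary case
one gets the complex conjugate of ⟨Ax, x⟩, which is real because A is self-adjoint.
-/

open scoped InnerProductSpace
open ComplexConjugate

/-- The rank-one operator `u ⊗ v : z ↦ ⟨z, v⟩ u`. -/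
noncomputable def rankOne' {H : Type*} [NormedAddCommGroup H] [InnerProductSpace ℂ H]
    (u v : H) : H →L[ℂ] H :=
  (innerSL ℂ v).smulRight u

section

variable {H : Type*} [NormedAddCommGroup H] [InnerProductSpace ℂ H]

lemma rankOne'_apply (u v z : H) : rankOne' u v z = ⟪v, z⟫_ℂ • u := rfl

lemma isSelfAdjoint_rankOne'_self [CompleteSpace H] (x : H) : IsSelfAdjoint (rankOne' x x) := by
  rw [ContinuousLinearMap.isSelfAdjoint_iff_isSymmetric]
  intro a b
  simp only [ContinuousLinearMap.coe_coe, rankOne'_apply, inner_smul_left, inner_smul_right,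
    inner_conj_symm]
  ring

lemma rankOne'_self_apply_self {x : H} (hx : ‖x‖ = 1) : rankOne' x x x = x := by
  rw [rankOne'_apply, inner_self_eq_norm_sq_to_K, hx]
  simp

lemma rankOne'_self_mul_self {x : H} (hx : ‖x‖ = 1) :
    rankOne' x x * rankOne' x x = rankOne' x x := by
  ext z
  change rankOne' x x (rankOne' x x z) = _
  rw [rankOne'_apply x x z, map_smul, rankOne'_self_apply_self hx]

lemma exists_norm_eq_one_smul_of_rankOne'_apply {x y : H} (hx : ‖x‖ = 1) (hy : ‖y‖ = 1)
    (h : rankOne' x x y = y) : ∃ c : ℂ, ‖c‖ = 1 ∧ y = c • x := by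
  refine ⟨⟪x, y⟫_ℂ, ?_, (h.symm.trans (rankOne'_apply x x y))⟩
  simpa only [rankOne'_apply, norm_smul, hx, hy, mul_one] using congrArg norm h

lemma inner_apply_smul_smul (A : H →L[ℂ] H) {c : ℂ} (hc : ‖c‖ = 1) (x : H) :
    ⟪A (c • x), c • x⟫_ℂ = ⟪A x, x⟫_ℂ := by
  rw [map_smul, inner_smul_left, inner_smul_right, ← mul_assoc, RCLike.conj_mul, hc]
  simp

lemma LinearIsometryEquiv.inner_map_map_of_antilinear (V : H ≃ₛₗᵢ[starRingEnd ℂ] H) (a b : H) :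
    ⟪V a, V b⟫_ℂ = conj ⟪a, b⟫_ℂ := by
  -- Polarization: `V` preserves the four norms, but turns `I • b` into `-I • V b`.
  have hIadd : V (a + Complex.I • b) = V a - Complex.I • V b := by
    rw [map_add, V.map_smulₛₗ]; simp [sub_eq_add_neg]
  have hIsub : V (a - Complex.I • b) = V a + Complex.I • V b := by
    rw [map_sub, V.map_smulₛₗ]; simp [sub_eq_add_neg]
  have n1 : ‖V a + V b‖ = ‖a + b‖ := by rw [← map_add, V.norm_map]
  have n2 : ‖V a - V b‖ = ‖a - b‖ := by rw [← map_sub, V.norm_map]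
  have n3 : ‖V a - Complex.I • V b‖ = ‖a + Complex.I • b‖ := by rw [← hIadd, V.norm_map]
  have n4 : ‖V a + Complex.I • V b‖ = ‖a - Complex.I • b‖ := by rw [← hIsub, V.norm_map]
  rw [inner_eq_sum_norm_sq_div_four, inner_eq_sum_norm_sq_div_four]
  simp only [RCLike.I_to_complex]
  rw [n1, n2, n3, n4, map_div₀]
  simp only [_root_.map_add, _root_.map_sub, map_mul, map_pow, RCLike.conj_ofReal, Complex.conj_I,
    map_ofNat]
  ring

lemma LinearIsometryEquiv.inner_conj_apply_self (U : H ≃ₗᵢ[ℂ] H) (A : H →L[ℂ] H) {x : H}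
    (hx : ‖x‖ = 1) (hU : U (rankOne' x x (U.symm x)) = x) :
    ⟪U (A (U.symm x)), x⟫_ℂ = ⟪A x, x⟫_ℂ := by
  obtain ⟨c, hc, hcx⟩ := exists_norm_eq_one_smul_of_rankOne'_apply hx
    (by rw [U.symm.norm_map, hx]) (U.symm_apply_eq.mpr hU.symm).symm
  rw [U.inner_map_eq_flip, hcx, inner_apply_smul_smul A hc]

lemma LinearIsometryEquiv.inner_conj_apply_self_of_antilinear (V : H ≃ₛₗᵢ[starRingEnd ℂ] H)
    {A : H →L[ℂ] H} (hA : (A : H →ₗ[ℂ] H).IsSymmetric) {x : H} (hx : ‖x‖ = 1)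
    (hV : V (rankOne' x x (V.symm x)) = x) :
    ⟪V (A (V.symm x)), x⟫_ℂ = ⟪A x, x⟫_ℂ := by
  obtain ⟨c, hc, hcx⟩ := exists_norm_eq_one_smul_of_rankOne'_apply hx
    (by rw [V.symm.norm_map, hx]) (V.symm_apply_eq.mpr hV.symm).symm
  have hflip := V.inner_map_map_of_antilinear (A (V.symm x)) (V.symm x)
  rw [V.apply_symm_apply] at hflip
  rw [hflip, hcx, inner_apply_smul_smul A hc, inner_conj_symm]
  exact (hA x x).symm

lemma ContinuousLinearMap.ext_inner_self_of_norm_eq_one {S T : H →L[ℂ] H}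
    (h : ∀ x : H, ‖x‖ = 1 → ⟪S x, x⟫_ℂ = ⟪T x, x⟫_ℂ) : S = T := by
  refine ContinuousLinearMap.coe_injective ((ext_inner_map _ _).mp fun x => ?_)
  rcases eq_or_ne x 0 with rfl | hx
  · simp
  obtain ⟨r, w, hw, rfl⟩ : ∃ (r : ℂ) (w : H), ‖w‖ = 1 ∧ x = r • w := by
    have hr : ((‖x‖ : ℝ) : ℂ) ≠ 0 := by exact_mod_cast norm_ne_zero_iff.mpr hx
    refine ⟨_, _, ?_, (smul_inv_smul₀ hr x).symm⟩
    rw [norm_smul, norm_inv, Complex.norm_real, norm_norm, inv_mul_cancel₀ (by exact_mod_cast hr)]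
  simp only [LinearMap.map_smul, ContinuousLinearMap.coe_coe, inner_smul_left, inner_smul_right,
    h w hw]

end

theorem stmt_18 {H : Type*} [NormedAddCommGroup H] [InnerProductSpace ℂ H]
    [CompleteSpace H] (φ : (H →L[ℂ] H) → (H →L[ℂ] H))
    (hproj : ∀ P : H →L[ℂ] H, IsSelfAdjoint P → P * P = P → φ P = P)
    (hloc : ∀ A : H →L[ℂ] H, IsSelfAdjoint A → ∀ x : H, ‖x‖ = 1 →
      (∃ U : H ≃ₗᵢ[ℂ] H,
        (∀ z : H, φ A z = U (A (U.symm z))) ∧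
        (∀ z : H, φ (rankOne' x x) z = U (rankOne' x x (U.symm z)))) ∨
      (∃ V : H ≃ₛₗᵢ[starRingEnd ℂ] H,
        (∀ z : H, φ A z = V (A (V.symm z))) ∧
        (∀ z : H, φ (rankOne' x x) z = V (rankOne' x x (V.symm z))))) :
    ∀ A : H →L[ℂ] H, IsSelfAdjoint A → φ A = A := by
  intro A hA
  refine ContinuousLinearMap.ext_inner_self_of_norm_eq_one fun x hx => ?_
  have hfix : φ (rankOne' x x) x = x := by
    rw [hproj _ (isSelfAdjoint_rankOne'_self x) (rankOne'_self_mul_self hx),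
      rankOne'_self_apply_self hx]
  rcases hloc A hA x hx with ⟨U, hAU, hPU⟩ | ⟨V, hAV, hPV⟩
  · rw [hAU, U.inner_conj_apply_self A hx ((hPU x).symm.trans hfix)]
  · rw [hAV, V.inner_conj_apply_self_of_antilinear
      (ContinuousLinearMap.isSelfAdjoint_iff_isSymmetric.mp hA) hx ((hPV x).symm.trans hfix)]
end
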